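/- Pairwise likelihood, two exceedances: let β, κ > 0, a₁, a₂, a₃ > 0, let μ = Γ(a₁,β) ⊗ Γ(a₂,β) ⊗ Γ(a₃,β) on ℝ³, and set Λ₁ = s₁ + s₂, Λ₂ = s₂ + s₃. Then for all x₁, x₂ ≥ 0, ∫_{ℝ³} Λ₁ Λ₂ e^{−(κ+x₁)Λ₁ − (κ+x₂)Λ₂} dμ = (1/β²)(1 + (κ+x₁)/β)^{−a₁−1} (1 + (2κ+x₁+x₂)/β)^{−a₂−2} (1 + (κ+x₂)/β)^{−a₃−1} × [ a₁a₂ (1 + (2κ+x₁+x₂)/β)(1 + (κ+x₂)/β) + a₁a₃ (1 + (2κ+x₁+x₂)/β)² + a₂(a₂+1)(1 + (κ+x₁)/β)(1 + (κ+x₂)/β) + a₂a₃ (1 + (κ+x₁)/β)(1 + (2κ+x₁+x₂)/β) ]. -/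

import Mathlib

open MeasureTheory ProbabilityTheory Real Set

/-! With `cᵢ = κ + xᵢ` the exponent is `c₁ s₁ + (c₁ + c₂) s₂ + c₂ s₃`, and
`Λ₁ Λ₂ = s₁ s₂ + s₁ s₃ + s₂² + s₂ s₃`, so the integrand is a sum of four products of
functions of one slice each. Under the product measure each term factorises into tilted
Gamma moments `∫ xᵏ e^{-c x} dΓ(a, β) = Γ(a + k) / Γ(a) · (β + c)^{-k} (1 + c/β)^{-a}`,
which are Euler's integral for `Γ(a + k)` at rate `β + c`. -/

/-- The slice measure: product of three Gamma distributions with shapes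
`a₁, a₂, a₃` and common rate `β`, the law of the slices of the trawl sets at two
time points, with latent values `Λ₁ = S₁ + S₂`, `Λ₂ = S₂ + S₃`. -/
noncomputable def sliceMeasure (a₁ a₂ a₃ β : ℝ) : Measure (ℝ × ℝ × ℝ) :=
  (gammaMeasure a₁ β).prod ((gammaMeasure a₂ β).prod (gammaMeasure a₃ β))

instance (a r : ℝ) : SFinite (gammaMeasure a r) := by
  unfold gammaMeasure; infer_instance

section GammaMeasure

variable {a r : ℝ}

lemma integral_gammaMeasure (ha : 0 < a) (hr : 0 < r) (f : ℝ → ℝ) :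
    ∫ x, f x ∂gammaMeasure a r = ∫ x in Ioi 0, gammaPDFReal a r x * f x := by
  rw [gammaMeasure, integral_withDensity_eq_integral_toReal_smul (f := gammaPDF a r)
    (measurable_gammaPDFReal a r).ennreal_ofReal (ae_of_all _ fun _ => ENNReal.ofReal_lt_top),
    ← integral_Ici_eq_integral_Ioi, setIntegral_eq_integral_of_forall_compl_eq_zero]
  · simp_rw [gammaPDF, ENNReal.toReal_ofReal (gammaPDFReal_nonneg ha hr _), smul_eq_mul]
  · intro x hx
    simp [gammaPDFReal, notMem_Ici.mp hx]

lemma integrable_gammaMeasure_iff (ha : 0 < a) (hr : 0 < r) {f : ℝ → ℝ} :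
    Integrable f (gammaMeasure a r) ↔
      IntegrableOn (fun x => gammaPDFReal a r x * f x) (Ioi 0) := by
  rw [gammaMeasure, integrable_withDensity_iff_integrable_smul' (f := gammaPDF a r)
    (measurable_gammaPDFReal a r).ennreal_ofReal (ae_of_all _ fun _ => ENNReal.ofReal_lt_top),
    ← integrableOn_Ici_iff_integrableOn_Ioi, integrableOn_iff_integrable_of_support_subset]
  · simp_rw [gammaPDF, ENNReal.toReal_ofReal (gammaPDFReal_nonneg ha hr _), smul_eq_mul]
  · intro x hx
    by_contra h
    simp [gammaPDFReal, notMem_Ici.mp h] at hx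

lemma gammaPDFReal_mul_pow_mul_exp {c x : ℝ} (k : ℕ) (hx : 0 < x) :
    gammaPDFReal a r x * (x ^ k * exp (-(c * x)))
      = r ^ a / Gamma a * (x ^ (a + k - 1) * exp (-((r + c) * x))) := by
  rw [gammaPDFReal, if_pos hx.le, add_sub_right_comm, rpow_add hx, rpow_natCast, add_mul,
    neg_add, exp_add]
  ring

variable {c : ℝ}

lemma integrable_pow_mul_exp_neg_mul_gammaMeasure (k : ℕ) (ha : 0 < a) (hr : 0 < r)
    (hrc : 0 < r + c) :
    Integrable (fun x => x ^ k * exp (-(c * x))) (gammaMeasure a r) := by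
  rw [integrable_gammaMeasure_iff ha hr]
  have hk : -1 < a + k - 1 := by linarith [k.cast_nonneg (α := ℝ)]
  refine IntegrableOn.congr_fun (Integrable.const_mul
    (integrableOn_rpow_mul_exp_neg_mul_rpow hk one_pos hrc) (r ^ a / Gamma a))
    (fun x hx => ?_) measurableSet_Ioi
  rw [gammaPDFReal_mul_pow_mul_exp k hx, rpow_one, neg_mul]

lemma integral_pow_mul_exp_neg_mul_gammaMeasure (k : ℕ) (ha : 0 < a) (hr : 0 < r)
    (hrc : 0 < r + c) :
    ∫ x, x ^ k * exp (-(c * x)) ∂gammaMeasure a r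
      = Gamma (a + k) / Gamma a / (r + c) ^ k * (1 + c / r) ^ (-a) := by
  rw [integral_gammaMeasure ha hr, setIntegral_congr_fun measurableSet_Ioi
    (fun x hx => gammaPDFReal_mul_pow_mul_exp k hx), integral_const_mul,
    integral_rpow_mul_exp_neg_mul_Ioi (by positivity) hrc]
  have hr' : 1 + c / r = (r + c) / r := by field_simp
  rw [hr', div_rpow hrc.le hr.le, rpow_neg hrc.le, rpow_neg hr.le, div_rpow zero_le_one hrc.le,
    one_rpow, rpow_add hrc, rpow_natCast]
  have := (Gamma_pos_of_pos ha).ne'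
  field_simp

end GammaMeasure

section SliceMeasure

variable {a₁ a₂ a₃ β : ℝ}

lemma integrable_sliceMeasure_mul {f g h : ℝ → ℝ} (hf : Integrable f (gammaMeasure a₁ β))
    (hg : Integrable g (gammaMeasure a₂ β)) (hh : Integrable h (gammaMeasure a₃ β)) :
    Integrable (fun s : ℝ × ℝ × ℝ => f s.1 * (g s.2.1 * h s.2.2)) (sliceMeasure a₁ a₂ a₃ β) :=
  hf.mul_prod (hg.mul_prod hh)

lemma integral_sliceMeasure_mul (f g h : ℝ → ℝ) :
    ∫ s, f s.1 * (g s.2.1 * h s.2.2) ∂sliceMeasure a₁ a₂ a₃ β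
      = (∫ x, f x ∂gammaMeasure a₁ β)
          * ((∫ x, g x ∂gammaMeasure a₂ β) * ∫ x, h x ∂gammaMeasure a₃ β) := by
  rw [sliceMeasure, integral_prod_mul f (fun p : ℝ × ℝ => g p.1 * h p.2), integral_prod_mul g h]

variable {c₁ c₂ c₃ : ℝ}

lemma integrable_sliceMeasure_pow_mul_exp (i j l : ℕ) (ha₁ : 0 < a₁) (ha₂ : 0 < a₂)
    (ha₃ : 0 < a₃) (hβ : 0 < β) (hc₁ : 0 < β + c₁) (hc₂ : 0 < β + c₂) (hc₃ : 0 < β + c₃) :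
    Integrable (fun s : ℝ × ℝ × ℝ => s.1 ^ i * exp (-(c₁ * s.1))
      * (s.2.1 ^ j * exp (-(c₂ * s.2.1)) * (s.2.2 ^ l * exp (-(c₃ * s.2.2)))))
      (sliceMeasure a₁ a₂ a₃ β) :=
  integrable_sliceMeasure_mul (integrable_pow_mul_exp_neg_mul_gammaMeasure i ha₁ hβ hc₁)
    (integrable_pow_mul_exp_neg_mul_gammaMeasure j ha₂ hβ hc₂)
    (integrable_pow_mul_exp_neg_mul_gammaMeasure l ha₃ hβ hc₃)

lemma integral_sliceMeasure_pow_mul_exp (i j l : ℕ) (ha₁ : 0 < a₁) (ha₂ : 0 < a₂)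
    (ha₃ : 0 < a₃) (hβ : 0 < β) (hc₁ : 0 < β + c₁) (hc₂ : 0 < β + c₂) (hc₃ : 0 < β + c₃) :
    ∫ s, s.1 ^ i * exp (-(c₁ * s.1))
        * (s.2.1 ^ j * exp (-(c₂ * s.2.1)) * (s.2.2 ^ l * exp (-(c₃ * s.2.2))))
        ∂sliceMeasure a₁ a₂ a₃ β
      = Gamma (a₁ + i) / Gamma a₁ / (β + c₁) ^ i * (1 + c₁ / β) ^ (-a₁)
          * (Gamma (a₂ + j) / Gamma a₂ / (β + c₂) ^ j * (1 + c₂ / β) ^ (-a₂)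
            * (Gamma (a₃ + l) / Gamma a₃ / (β + c₃) ^ l * (1 + c₃ / β) ^ (-a₃))) := by
  rw [integral_sliceMeasure_mul (fun x => x ^ i * exp (-(c₁ * x)))
    (fun x => x ^ j * exp (-(c₂ * x))) (fun x => x ^ l * exp (-(c₃ * x))),
    integral_pow_mul_exp_neg_mul_gammaMeasure i ha₁ hβ hc₁,
    integral_pow_mul_exp_neg_mul_gammaMeasure j ha₂ hβ hc₂,
    integral_pow_mul_exp_neg_mul_gammaMeasure l ha₃ hβ hc₃]

end SliceMeasure

lemma add_mul_add_mul_exp_eq_sum_prod (c₁ c₂ s₁ s₂ s₃ : ℝ) :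
    (s₁ + s₂) * (s₂ + s₃) * exp (-c₁ * (s₁ + s₂) - c₂ * (s₂ + s₃))
      = s₁ ^ 1 * exp (-(c₁ * s₁))
            * (s₂ ^ 1 * exp (-((c₁ + c₂) * s₂)) * (s₃ ^ 0 * exp (-(c₂ * s₃))))
        + s₁ ^ 1 * exp (-(c₁ * s₁))
            * (s₂ ^ 0 * exp (-((c₁ + c₂) * s₂)) * (s₃ ^ 1 * exp (-(c₂ * s₃))))
        + s₁ ^ 0 * exp (-(c₁ * s₁))
            * (s₂ ^ 2 * exp (-((c₁ + c₂) * s₂)) * (s₃ ^ 0 * exp (-(c₂ * s₃))))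
        + s₁ ^ 0 * exp (-(c₁ * s₁))
            * (s₂ ^ 1 * exp (-((c₁ + c₂) * s₂)) * (s₃ ^ 1 * exp (-(c₂ * s₃)))) := by
  rw [show -c₁ * (s₁ + s₂) - c₂ * (s₂ + s₃)
      = -(c₁ * s₁) + (-((c₁ + c₂) * s₂) + -(c₂ * s₃)) by ring, exp_add, exp_add]
  ring

/-- Pairwise likelihood, two exceedances: with `Λ₁ = S₁ + S₂`, `Λ₂ = S₂ + S₃` in the
slice model and `x₁, x₂ ≥ 0`,
`E[Λ₁Λ₂ e^{-(κ+x₁)Λ₁ - (κ+x₂)Λ₂}]`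
`= (1/β²)(1 + (κ+x₁)/β)^{-a₁-1}(1 + (2κ+x₁+x₂)/β)^{-a₂-2}(1 + (κ+x₂)/β)^{-a₃-1}`
`× [a₁a₂(1 + (2κ+x₁+x₂)/β)(1 + (κ+x₂)/β) + a₁a₃(1 + (2κ+x₁+x₂)/β)²`
`+ a₂(a₂+1)(1 + (κ+x₁)/β)(1 + (κ+x₂)/β) + a₂a₃(1 + (κ+x₁)/β)(1 + (2κ+x₁+x₂)/β)]`. -/
theorem pairwise_likelihood_two_exceedances (β κ a₁ a₂ a₃ : ℝ)
    (hβ : 0 < β) (hκ : 0 < κ) (ha₁ : 0 < a₁) (ha₂ : 0 < a₂) (ha₃ : 0 < a₃) :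
    ∀ x₁ x₂ : ℝ, 0 ≤ x₁ → 0 ≤ x₂ →
      (∫ s : ℝ × ℝ × ℝ,
          (s.1 + s.2.1) * (s.2.1 + s.2.2)
            * Real.exp (-(κ + x₁) * (s.1 + s.2.1) - (κ + x₂) * (s.2.1 + s.2.2))
          ∂(sliceMeasure a₁ a₂ a₃ β))
        = (1 / β ^ 2) * (1 + (κ + x₁) / β) ^ (-a₁ - 1)
            * (1 + (2 * κ + x₁ + x₂) / β) ^ (-a₂ - 2)
            * (1 + (κ + x₂) / β) ^ (-a₃ - 1)
            * (a₁ * a₂ * (1 + (2 * κ + x₁ + x₂) / β) * (1 + (κ + x₂) / β)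
              + a₁ * a₃ * (1 + (2 * κ + x₁ + x₂) / β) ^ (2 : ℕ)
              + a₂ * (a₂ + 1) * (1 + (κ + x₁) / β) * (1 + (κ + x₂) / β)
              + a₂ * a₃ * (1 + (κ + x₁) / β) * (1 + (2 * κ + x₁ + x₂) / β)) := by
  intro x₁ x₂ hx₁ hx₂
  set c₁ := κ + x₁
  set c₂ := κ + x₂
  rw [show 2 * κ + x₁ + x₂ = c₁ + c₂ by ring]
  have hc₁ : 0 < β + c₁ := by positivity
  have hc₁₂ : 0 < β + (c₁ + c₂) := by positivity
  have hc₂ : 0 < β + c₂ := by positivity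
  have hI (i j l : ℕ) := integrable_sliceMeasure_pow_mul_exp i j l ha₁ ha₂ ha₃ hβ hc₁ hc₁₂ hc₂
  simp_rw [add_mul_add_mul_exp_eq_sum_prod c₁ c₂]
  rw [integral_add ?_ (hI 0 1 1), integral_add ?_ (hI 0 2 0), integral_add (hI 1 1 0) (hI 1 0 1)]
  · simp only [integral_sliceMeasure_pow_mul_exp _ _ _ ha₁ ha₂ ha₃ hβ hc₁ hc₁₂ hc₂]
    rw [rpow_sub_one (by positivity), rpow_sub_one (by positivity),
      show -a₂ - 2 = -a₂ - (2 : ℕ) by norm_num, rpow_sub_natCast (by positivity)]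
    simp only [Nat.cast_zero, Nat.cast_one, Nat.cast_ofNat, add_zero, pow_zero, pow_one,
      Gamma_add_one ha₁.ne', Gamma_add_one ha₂.ne', Gamma_add_one ha₃.ne']
    rw [show a₂ + 2 = (a₂ + 1) + 1 by ring, Gamma_add_one (by positivity), Gamma_add_one ha₂.ne']
    have := (Gamma_pos_of_pos ha₁).ne'
    have := (Gamma_pos_of_pos ha₂).ne'
    have := (Gamma_pos_of_pos ha₃).ne'
    field_simp
  · exact (hI 1 1 0).add (hI 1 0 1)
  · exact ((hI 1 1 0).add (hI 1 0 1)).add (hI 0 2 0)
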